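/- For any graph G on n vertices, the sum of squares of the negative adjacency eigenvalues satisfies s⁻(G) ≤ n²/4. -/

import Mathlib

open Finset SimpleGraph

/-- The adjacency matrix of a simple graph (over `ℝ`) is Hermitian. -/
theorem adjHerm {V : Type*} [Fintype V] [DecidableEq V] (G : SimpleGraph V)
    [DecidableRel G.Adj] : (G.adjMatrix ℝ).IsHermitian :=
  by rw [Matrix.IsHermitian, Matrix.conjTranspose_eq_transpose_of_trivial]; exact isSymm_adjMatrix G

open scoped Classical in
/-- The eigenvalues of the adjacency matrix of `G`. -/
noncomputable def adjEig {V : Type*} [Fintype V] [DecidableEq V] (G : SimpleGraph V) : V → ℝ :=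
  (adjHerm G).eigenvalues

/-- `s⁺(G)`: the sum of the squares of the positive adjacency eigenvalues. -/
noncomputable def sPos {V : Type*} [Fintype V] [DecidableEq V] (G : SimpleGraph V) : ℝ :=
  ∑ i, if 0 < adjEig G i then (adjEig G i) ^ 2 else 0

/-- `s⁻(G)`: the sum of the squares of the negative adjacency eigenvalues. -/
noncomputable def sNeg {V : Type*} [Fintype V] [DecidableEq V] (G : SimpleGraph V) : ℝ :=
  ∑ i, if adjEig G i < 0 then (adjEig G i) ^ 2 else 0

/-- The spectral radius (largest adjacency eigenvalue) of `G`. -/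
noncomputable def specRad {V : Type*} [Fintype V] [DecidableEq V] (G : SimpleGraph V) : ℝ :=
  ⨆ i, adjEig G i

open scoped Classical in
/-- The number of edges of `G`. -/
noncomputable def numEdges {V : Type*} [Fintype V] (G : SimpleGraph V) : ℕ :=
  G.edgeFinset.card

open scoped Classical in
/-- The Randić index `R(G) = ∑_{ij ∈ E} 1/√(dᵢ·dⱼ)`, written as half the sum
over ordered adjacent pairs. -/
noncomputable def randic {V : Type*} [Fintype V] (G : SimpleGraph V) : ℝ :=
  (1 / 2) * ∑ i, ∑ j,
    if G.Adj i j then 1 / Real.sqrt ((G.degree i : ℝ) * (G.degree j : ℝ)) else 0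

/-!
Let `λ₁` be the largest adjacency eigenvalue and `m` the number of edges. The squares of all
eigenvalues sum to `tr A² = 2m`, and testing the Rayleigh quotient on the all-ones vector gives
`2m = 𝟙ᵀA𝟙 ≤ λ₁ n`. As `λ₁ ≥ 0` is not counted in `s⁻`,
`s⁻ ≤ 2m - λ₁² ≤ λ₁ n - λ₁² ≤ n²/4`.
-/

open Matrix
open scoped ComplexOrder MatrixOrder

namespace Matrix.IsHermitian

variable {𝕜 ι : Type*} [RCLike 𝕜] [Fintype ι] [DecidableEq ι] {A : Matrix ι ι 𝕜}
  (hA : A.IsHermitian)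
include hA

theorem trace_cfc (f : ℝ → ℝ) : (cfc f A).trace = ∑ i, (f (hA.eigenvalues i) : 𝕜) := by
  rw [hA.cfc_eq, IsHermitian.cfc, Unitary.conjStarAlgAut_apply, trace_mul_cycle,
    Unitary.coe_star_mul_self, Matrix.one_mul, trace_diagonal]
  rfl

theorem trace_sq : (A ^ 2).trace = ∑ i, (hA.eigenvalues i ^ 2 : 𝕜) := by
  rw [← cfc_pow_id (R := ℝ) A 2 hA.isSelfAdjoint, hA.trace_cfc]
  push_cast
  rfl

theorem dotProduct_mulVec_le {c : ℝ} (hc : ∀ i, hA.eigenvalues i ≤ c) (x : ι → 𝕜) :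
    star x ⬝ᵥ A *ᵥ x ≤ (c : 𝕜) * (star x ⬝ᵥ x) := by
  have hle : A ≤ algebraMap ℝ _ c := by
    rw [le_algebraMap_iff_spectrum_le hA.isSelfAdjoint, hA.spectrum_real_eq_range_eigenvalues]
    rintro - ⟨i, rfl⟩
    exact hc i
  have := (Matrix.le_iff.mp hle).dotProduct_mulVec_nonneg x
  rw [sub_mulVec, dotProduct_sub, sub_nonneg] at this
  simpa [Algebra.algebraMap_eq_smul_one, smul_mulVec, dotProduct_smul] using this

end Matrix.IsHermitian

theorem sum_ite_neg_sq_add_sq_le_sum_sq {ι : Type*} [Fintype ι] [DecidableEq ι] (f : ι → ℝ)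
    {j : ι} (hj : 0 ≤ f j) :
    (∑ i, if f i < 0 then f i ^ 2 else 0) + f j ^ 2 ≤ ∑ i, f i ^ 2 := by
  rw [← add_sum_erase _ _ (mem_univ j), ← add_sum_erase _ _ (mem_univ j), if_neg hj.not_gt,
    zero_add, add_comm]
  gcongr with i
  split_ifs
  · exact le_rfl
  · positivity

namespace SimpleGraph

variable {V : Type*} [Fintype V] [DecidableEq V] (G : SimpleGraph V)

theorem trace_adjMatrix_sq {α : Type*} [Semiring α] [DecidableRel G.Adj] :
    (G.adjMatrix α ^ 2).trace = Fintype.card G.Dart := by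
  simp only [sq, trace, diag_apply, adjMatrix_mul_self_apply_self, dart_card_eq_sum_degrees]
  push_cast
  rfl

theorem adjEig_le_specRad (i : V) : adjEig G i ≤ specRad G :=
  le_ciSup (Finite.bddAbove_range _) i

theorem sum_adjEig_sq : ∑ i, adjEig G i ^ 2 = 2 * numEdges G := by
  classical
  have h := (adjHerm G).trace_sq
  rw [trace_adjMatrix_sq, dart_card_eq_twice_card_edges] at h
  rw [adjEig, numEdges]
  exact_mod_cast h.symm

theorem two_mul_numEdges_le : 2 * (numEdges G : ℝ) ≤ specRad G * Fintype.card V := by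
  classical
  have h := (adjHerm G).dotProduct_mulVec_le (adjEig_le_specRad G) 1
  rw [star_one, dotProduct_comm, ← natCast_card_dart_eq_dotProduct,
    dart_card_eq_twice_card_edges] at h
  simpa [numEdges, dotProduct_one] using h

theorem specRad_nonneg [Nonempty V] : 0 ≤ specRad G := by
  have hcard : (0 : ℝ) < Fintype.card V := by exact_mod_cast Fintype.card_pos
  exact nonneg_of_mul_nonneg_left ((by positivity : (0 : ℝ) ≤ 2 * numEdges G).trans
    (two_mul_numEdges_le G)) hcard

theorem sNeg_add_specRad_sq_le [Nonempty V] : sNeg G + specRad G ^ 2 ≤ 2 * numEdges G := by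
  obtain ⟨i, hi⟩ := exists_eq_ciSup_of_finite (f := adjEig G)
  rw [← sum_adjEig_sq, sNeg, specRad, ← hi]
  exact sum_ite_neg_sq_add_sq_le_sum_sq _ (hi ▸ specRad_nonneg G)

end SimpleGraph

/-- `s⁻(G) ≤ n²/4`. -/
theorem sNeg_le_n_sq_div_four {n : ℕ} (G : SimpleGraph (Fin n)) :
    sNeg G ≤ (n : ℝ) ^ 2 / 4 := by
  rcases isEmpty_or_nonempty (Fin n) with hV | hV
  · simp only [sNeg, univ_eq_empty, sum_empty]
    positivity
  have h₁ := G.sNeg_add_specRad_sq_le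
  have h₂ := G.two_mul_numEdges_le
  rw [Fintype.card_fin] at h₂
  nlinarith [sq_nonneg (specRad G - n / 2)]
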